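/- arXiv:2307.11700 — 4 statements merged into one kernel-verified Lean document; each statement's English description precedes it below -/
import Mathlib

section
/- For every x in (0,1), if k = floor(1/x), then applying the Farey map F k times to x equals the Gauss map applied to x, where F(x) = x/(1-x) for x in [0,1/2) and F(x) = (1-x)/x for x in [1/2,1), and G(x) = 1/x - floor(1/x). -/
/-! The left branch of the Farey map sends `1/t` to `1/(t - 1)` and the right branch sends it to
`t - 1`. Starting from `t = 1/x ∈ [k, k + 1)`, the first `k - 1` steps stay on the left branch
(at `x = 1/2` the two branches agree), and the last one lands at `t - k = fract t`. -/

/-- The Farey map on [0,1). -/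
noncomputable def fareyMap (x : ℝ) : ℝ := if x < 1/2 then x / (1 - x) else (1 - x) / x

/-- The Gauss map on [0,1). -/
noncomputable def gaussMap (x : ℝ) : ℝ := if x = 0 then 0 else 1/x - ⌊1/x⌋

lemma gaussMap_eq_fract_one_div {x : ℝ} (hx : x ≠ 0) : gaussMap x = Int.fract (1 / x) := by
  rw [gaussMap, if_neg hx, Int.fract]

lemma fareyMap_of_le_half {x : ℝ} (hx : x ≤ 1 / 2) : fareyMap x = x / (1 - x) := by
  rcases hx.lt_or_eq with h | rfl
  · exact if_pos h
  · norm_num [fareyMap]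

lemma fareyMap_one_div_of_two_le {t : ℝ} (ht : 2 ≤ t) : fareyMap (1 / t) = 1 / (t - 1) := by
  have ht0 : t ≠ 0 := by positivity
  have ht1 : t - 1 ≠ 0 := by linarith
  rw [fareyMap_of_le_half (one_div_le_one_div_of_le two_pos ht)]
  field_simp

lemma fareyMap_one_div_of_le_two {t : ℝ} (ht0 : 0 < t) (ht : t ≤ 2) :
    fareyMap (1 / t) = t - 1 := by
  have hhalf : ¬ 1 / t < 1 / 2 := not_lt.2 (one_div_le_one_div_of_le ht0 ht)
  rw [fareyMap, if_neg hhalf]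
  field_simp

lemma fareyMap_iterate_one_div {t : ℝ} (n : ℕ) (ht : n + 1 ≤ t) :
    fareyMap^[n] (1 / t) = 1 / (t - n) := by
  induction n generalizing t with
  | zero => simp
  | succ n ih =>
    push_cast at ht
    rw [Function.iterate_succ_apply, fareyMap_one_div_of_two_le (by linarith),
      ih (by linarith)]
    push_cast
    ring

theorem farey_iterate_eq_gauss (x : ℝ) (hx : x ∈ Set.Ioo (0:ℝ) 1)
    (k : ℕ) (hk : (k : ℤ) = ⌊1/x⌋) :
    fareyMap^[k] x = gaussMap x := by
  obtain ⟨hx0, hx1⟩ := hx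
  obtain ⟨t, rfl⟩ : ∃ t, x = 1 / t := ⟨1 / x, (one_div_one_div x).symm⟩
  rw [one_div_one_div] at hk
  have ht0 : 0 < t := one_div_pos.1 hx0
  have ht1 : 1 < t := (div_lt_one ht0).1 hx1
  have hkt : (k : ℝ) ≤ t ∧ t < k + 1 := by exact_mod_cast Int.floor_eq_iff.1 hk.symm
  obtain ⟨n, rfl⟩ : ∃ n, k = n + 1 :=
    Nat.exists_eq_add_one.2 (by exact_mod_cast (by linarith : (0 : ℝ) < k))
  push_cast at hkt
  rw [gaussMap_eq_fract_one_div hx0.ne', one_div_one_div, Function.iterate_succ_apply',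
    fareyMap_iterate_one_div n (by linarith),
    fareyMap_one_div_of_le_two (by linarith) (by linarith), Int.fract, ← hk]
  push_cast
  ring
end

section
/- The measure with density 1/(1+xy)^2 on [0,1)×[0,1) is invariant under the natural extension of the Gauss map, defined by Ḡ(x,y) = (1/x - k, 1/(k+y)) for x ∈ (1/(k+1), 1/k], k ≥ 1, and Ḡ(0,y) = (0,y). -/
open MeasureTheory

/-- The natural extension of the Gauss map. -/
noncomputable def gaussNatExt (p : ℝ × ℝ) : ℝ × ℝ :=
  if p.1 = 0 then (0, p.2)
  else (1/p.1 - ⌊1/p.1⌋, 1/((⌊1/p.1⌋ : ℝ) + p.2))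

/-- The measure with density 1/(1+xy)² on [0,1)×[0,1). -/
noncomputable def gaussMeasure : Measure (ℝ × ℝ) :=
  ((volume : Measure (ℝ × ℝ)).restrict (Set.Ico 0 1 ×ˢ Set.Ico 0 1)).withDensity
    (fun p => ENNReal.ofReal (1 / (1 + p.1 * p.2)^2))

/-! On the strip where the first digit `⌊1/x⌋` equals `k ≥ 1`, `Ḡ` is the map
`T_k (x, y) = (1/x - k, 1/(k + y))`, which sends `(1/(k+1), 1/k] × [0,1)` bijectively onto
`[0,1) × (1/(k+1), 1/k]` with Jacobian `1/(x²(k+y)²)`. Since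
`1 + (1/x - k)/(k + y) = (1 + xy)/(x(k + y))`, the change of variables turns the density
`1/(1+xy)²` at `T_k (x, y)` back into the density at `(x, y)`. Summing over `k`, the strips on
either side tile the unit square up to the null lines `x = 0` and `y = 0`. -/

open Set Filter

def gaussCylinder (k : ℤ) : Set ℝ := {x | ⌊x⁻¹⌋ = k}

theorem measurableSet_gaussCylinder (k : ℤ) : MeasurableSet (gaussCylinder k) :=
  (Int.measurable_floor.comp measurable_inv) (measurableSet_singleton k)

theorem pairwise_disjoint_gaussCylinder : Pairwise (Function.onFun Disjoint gaussCylinder) :=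
  fun _ _ hkl => disjoint_left.2 fun _ hk hl => hkl (hk.symm.trans hl)

theorem iUnion_gaussCylinder_natCast_add_one : ⋃ n : ℕ, gaussCylinder (n + 1) = Ioc 0 1 := by
  ext x
  have hpos : (∃ n : ℕ, ⌊x⁻¹⌋ = n + 1) ↔ 0 < ⌊x⁻¹⌋ :=
    ⟨fun ⟨n, h⟩ => by omega, fun h => ⟨(⌊x⁻¹⌋ - 1).toNat, by omega⟩⟩
  simp only [mem_iUnion, gaussCylinder, mem_ofPred_eq, hpos, Int.floor_pos, one_le_inv_iff₀,
    mem_Ioc]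

theorem ne_zero_of_mem_gaussCylinder {k : ℤ} (hk : k ≠ 0) {x : ℝ} (hx : x ∈ gaussCylinder k) :
    x ≠ 0 := by
  rintro rfl
  exact hk (by simpa [gaussCylinder] using hx.symm)

-- A bijection of the whole plane, since `inv_inv` holds at `0` as well.
noncomputable def gaussBranch (k : ℝ) : ℝ × ℝ ≃ ℝ × ℝ where
  toFun p := (p.1⁻¹ - k, (k + p.2)⁻¹)
  invFun q := ((k + q.1)⁻¹, q.2⁻¹ - k)
  left_inv p := by simp
  right_inv q := by simp

theorem gaussBranch_apply (k : ℝ) (p : ℝ × ℝ) : gaussBranch k p = (p.1⁻¹ - k, (k + p.2)⁻¹) := rfl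

theorem gaussBranch_symm_apply (k : ℝ) (q : ℝ × ℝ) :
    (gaussBranch k).symm q = ((k + q.1)⁻¹, q.2⁻¹ - k) := rfl

theorem det_prodMap_toSpanSingleton {𝕜 : Type*} [CommRing 𝕜] [TopologicalSpace 𝕜]
    [ContinuousMul 𝕜] (a b : 𝕜) :
    ((ContinuousLinearMap.toSpanSingleton 𝕜 a).prodMap
      (ContinuousLinearMap.toSpanSingleton 𝕜 b)).det = a * b := by
  rw [ContinuousLinearMap.det, ContinuousLinearMap.coe_prodMap, LinearMap.det_prodMap]
  simp

theorem hasFDerivAt_gaussBranch (k : ℝ) {p : ℝ × ℝ} (hx : p.1 ≠ 0) (hy : k + p.2 ≠ 0) :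
    HasFDerivAt (gaussBranch k)
      ((ContinuousLinearMap.toSpanSingleton ℝ (-(p.1 ^ 2)⁻¹)).prodMap
        (ContinuousLinearMap.toSpanSingleton ℝ (-((k + p.2) ^ 2)⁻¹))) p := by
  have hsnd : HasDerivAt (fun y => (k + y)⁻¹) (-((k + p.2) ^ 2)⁻¹) p.2 := by
    simpa [Function.comp_def] using (hasDerivAt_inv hy).comp p.2 ((hasDerivAt_id p.2).const_add k)
  exact ((hasDerivAt_inv hx).sub_const k).hasFDerivAt.prodMap p hsnd.hasFDerivAt

theorem gaussBranch_image_gaussCylinder_prod (k : ℤ) :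
    gaussBranch k '' (gaussCylinder k ×ˢ Ico 0 1) = Ico 0 1 ×ˢ gaussCylinder k := by
  rw [Equiv.image_eq_preimage_symm]
  ext ⟨u, v⟩
  simp only [mem_preimage, gaussBranch_symm_apply, mem_prod, gaussCylinder, mem_ofPred_eq, inv_inv,
    ← Int.floor_eq_zero_iff, Int.floor_intCast_add, Int.floor_sub_intCast]
  omega

noncomputable def gaussDensity (p : ℝ × ℝ) : ENNReal := ENNReal.ofReal (1 / (1 + p.1 * p.2) ^ 2)

theorem gaussDensity_gaussBranch (k : ℝ) {p : ℝ × ℝ} (hx : p.1 ≠ 0) (hy : k + p.2 ≠ 0) :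
    ENNReal.ofReal |-(p.1 ^ 2)⁻¹ * -((k + p.2) ^ 2)⁻¹| * gaussDensity (gaussBranch k p) =
      gaussDensity p := by
  obtain ⟨x, y⟩ := p
  have hdenom : 1 + (x⁻¹ - k) * (k + y)⁻¹ = (1 + x * y) / (x * (k + y)) := by
    field_simp; ring
  rw [gaussDensity, gaussDensity, gaussBranch_apply, ← ENNReal.ofReal_mul (abs_nonneg _)]
  congr 1
  simp only at hdenom ⊢
  rw [hdenom, neg_mul_neg, abs_of_nonneg (by positivity)]
  field_simp

theorem withDensity_gaussDensity_image_gaussBranch (k : ℝ) {s : Set (ℝ × ℝ)}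
    (hs : MeasurableSet s) (hs' : ∀ p ∈ s, p.1 ≠ 0 ∧ k + p.2 ≠ 0) :
    volume.withDensity gaussDensity (gaussBranch k '' s) = volume.withDensity gaussDensity s := by
  rw [withDensity_apply' _ s, withDensity_apply' _ (gaussBranch k '' s),
    lintegral_image_eq_lintegral_abs_det_fderiv_mul volume hs
      (fun p hp => (hasFDerivAt_gaussBranch k (hs' p hp).1 (hs' p hp).2).hasFDerivWithinAt)
      (gaussBranch k).injective.injOn]
  refine setLIntegral_congr_fun hs fun p hp => ?_
  rw [det_prodMap_toSpanSingleton, gaussDensity_gaussBranch k (hs' p hp).1 (hs' p hp).2]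

theorem gaussNatExt_eq_gaussBranch {p : ℝ × ℝ} (hp : p.1 ≠ 0) :
    gaussNatExt p = gaussBranch ⌊p.1⁻¹⌋ p := by
  simp [gaussNatExt, gaussBranch_apply, hp]

theorem measurable_gaussNatExt : Measurable gaussNatExt := by
  have hfloor : Measurable fun p : ℝ × ℝ => ((⌊1 / p.1⌋ : ℤ) : ℝ) :=
    measurable_from_top.comp (measurable_fst.const_div 1).floor
  exact Measurable.ite (measurable_fst (measurableSet_singleton 0))
    (measurable_const.prodMk measurable_snd)
    (((measurable_fst.const_div 1).sub hfloor).prodMk ((hfloor.add measurable_snd).const_div 1))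

theorem gaussMeasure_apply {B : Set (ℝ × ℝ)} (hB : MeasurableSet B) :
    gaussMeasure B = volume.withDensity gaussDensity (B ∩ Ico 0 1 ×ˢ Ico 0 1) := by
  rw [gaussMeasure, ← restrict_withDensity (measurableSet_Ico.prod measurableSet_Ico),
    Measure.restrict_apply hB]
  rfl

theorem measure_inter_Ico_prod_Ico_eq_tsum_gaussCylinder_prod {μ : Measure (ℝ × ℝ)}
    (hμ : μ ≪ volume) {B : Set (ℝ × ℝ)} (hB : MeasurableSet B) :
    μ (B ∩ Ico 0 1 ×ˢ Ico 0 1) = ∑' n : ℕ, μ (B ∩ gaussCylinder (n + 1) ×ˢ Ico 0 1) := by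
  have hae : Ico (0 : ℝ) 1 ×ˢ Ico (0 : ℝ) 1 =ᵐ[volume] Ioc 0 1 ×ˢ Ico 0 1 := by
    rw [Measure.volume_eq_prod]
    exact Measure.set_prod_ae_eq Ico_ae_eq_Ioc EventuallyEq.rfl
  rw [measure_congr (hμ.ae_eq (EventuallyEq.rfl.inter hae)),
    ← iUnion_gaussCylinder_natCast_add_one,
    iUnion_prod_const, inter_iUnion]
  refine measure_iUnion ?_ fun n =>
    hB.inter ((measurableSet_gaussCylinder _).prod measurableSet_Ico)
  exact (pairwise_disjoint_gaussCylinder.comp_of_injective fun m n h => by simpa using h).mono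
    fun m n h => (h.set_prod_left _ _).mono inter_subset_right inter_subset_right

theorem measure_inter_Ico_prod_Ico_eq_tsum_prod_gaussCylinder {μ : Measure (ℝ × ℝ)}
    (hμ : μ ≪ volume) {B : Set (ℝ × ℝ)} (hB : MeasurableSet B) :
    μ (B ∩ Ico 0 1 ×ˢ Ico 0 1) = ∑' n : ℕ, μ (B ∩ Ico 0 1 ×ˢ gaussCylinder (n + 1)) := by
  have hae : Ico (0 : ℝ) 1 ×ˢ Ico (0 : ℝ) 1 =ᵐ[volume] Ico 0 1 ×ˢ Ioc 0 1 := by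
    rw [Measure.volume_eq_prod]
    exact Measure.set_prod_ae_eq EventuallyEq.rfl Ico_ae_eq_Ioc
  rw [measure_congr (hμ.ae_eq (EventuallyEq.rfl.inter hae)),
    ← iUnion_gaussCylinder_natCast_add_one,
    prod_iUnion, inter_iUnion]
  refine measure_iUnion ?_ fun n =>
    hB.inter (measurableSet_Ico.prod (measurableSet_gaussCylinder _))
  exact (pairwise_disjoint_gaussCylinder.comp_of_injective fun m n h => by simpa using h).mono
    fun m n h => (h.set_prod_right _ _).mono inter_subset_right inter_subset_right

theorem withDensity_gaussDensity_preimage_gaussNatExt_inter {k : ℤ} (hk : 0 < k)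
    {A : Set (ℝ × ℝ)} (hA : MeasurableSet A) :
    volume.withDensity gaussDensity (gaussNatExt ⁻¹' A ∩ gaussCylinder k ×ˢ Ico 0 1) =
      volume.withDensity gaussDensity (A ∩ Ico 0 1 ×ˢ gaussCylinder k) := by
  have hx : ∀ p ∈ gaussCylinder k ×ˢ Ico (0 : ℝ) 1, p.1 ≠ 0 :=
    fun p hp => ne_zero_of_mem_gaussCylinder hk.ne' hp.1
  have hT : gaussNatExt ⁻¹' A ∩ gaussCylinder k ×ˢ Ico 0 1 =
      gaussBranch k ⁻¹' A ∩ gaussCylinder k ×ˢ Ico 0 1 := by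
    ext p
    refine and_congr_left fun hp => ?_
    rw [mem_preimage, mem_preimage, gaussNatExt_eq_gaussBranch (hx p hp), hp.1]
  have hs : MeasurableSet (gaussNatExt ⁻¹' A ∩ gaussCylinder k ×ˢ Ico 0 1) :=
    (measurable_gaussNatExt hA).inter ((measurableSet_gaussCylinder k).prod measurableSet_Ico)
  have himage : gaussBranch k '' (gaussNatExt ⁻¹' A ∩ gaussCylinder k ×ˢ Ico 0 1) =
      A ∩ Ico 0 1 ×ˢ gaussCylinder k := by
    rw [hT, inter_comm, image_inter_preimage, gaussBranch_image_gaussCylinder_prod, inter_comm]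
  rw [← himage, withDensity_gaussDensity_image_gaussBranch k hs]
  rintro p ⟨-, hp⟩
  exact ⟨hx p hp, by linarith [hp.2.1, (Int.cast_pos (R := ℝ)).2 hk]⟩

theorem gaussNatExt_invariant :
    ∀ A : Set (ℝ × ℝ), MeasurableSet A →
      gaussMeasure (gaussNatExt ⁻¹' A) = gaussMeasure A := by
  intro A hA
  have hμ := withDensity_absolutelyContinuous volume gaussDensity
  rw [gaussMeasure_apply (measurable_gaussNatExt hA), gaussMeasure_apply hA,
    measure_inter_Ico_prod_Ico_eq_tsum_gaussCylinder_prod hμ (measurable_gaussNatExt hA),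
    measure_inter_Ico_prod_Ico_eq_tsum_prod_gaussCylinder hμ hA]
  exact tsum_congr fun n =>
    withDensity_gaussDensity_preimage_gaussNatExt_inter n.cast_add_one_pos hA
end

section
/- The orbit of ∞ under the Θ-group acting on ℚ ∪ {∞} by Möbius transformations is exactly the set of rationals m/n in lowest terms with m ≢ n (mod 2) (i.e., exactly one of m, n is even), together with ∞. -/
abbrev SL2Z := Matrix.SpecialLinearGroup (Fin 2) ℤ

/-- The mod 2 condition defining the Θ-group: a ≡ d, b ≡ c, a ≢ b (mod 2). -/
def ThetaCond (M : SL2Z) : Prop :=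
  M.1 0 0 % 2 = M.1 1 1 % 2 ∧ M.1 0 1 % 2 = M.1 1 0 % 2 ∧ M.1 0 0 % 2 ≠ M.1 0 1 % 2

/-- A rational number is in the Θ-orbit of ∞ (i.e., equals a/c for some
[[a,b],[c,d]] ∈ Θ with c ≠ 0) iff, in lowest terms m/n, m ≢ n (mod 2). -/
theorem theta_orbit_infty (q : ℚ) :
    (∃ M : SL2Z, ThetaCond M ∧ (M.1 1 0 : ℚ) ≠ 0 ∧
        q = (M.1 0 0 : ℚ) / (M.1 1 0 : ℚ)) ↔
      ¬ (q.num % 2 = (q.den : ℤ) % 2) := by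
  constructor
  · rintro ⟨M, ⟨h1, h2, h3⟩, hc, hq⟩ heq
    set a := M.1 0 0 with ha
    set b := M.1 0 1 with hb
    set c := M.1 1 0 with hcdef
    set d := M.1 1 1 with hd
    have hcZ : c ≠ 0 := by exact_mod_cast hc
    have hden0 : ((q.den : ℚ)) ≠ 0 := by
      exact_mod_cast q.den_nz
    -- cross multiply
    have hcross : q.num * c = a * q.den := by
      have hq' : (q.num : ℚ) / (q.den : ℚ) = (a : ℚ) / (c : ℚ) := by
        rw [Rat.num_div_den]; exact hq
      have h0 : (q.num : ℚ) * c = a * q.den := (div_eq_div_iff hden0 hc).mp hq'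
      exact_mod_cast h0
    have hcop : q.num.natAbs.Coprime q.den := q.reduced
    have hmod : (q.num * c) % 2 = (a * q.den) % 2 := by rw [hcross]
    rw [Int.mul_emod, Int.mul_emod a] at hmod
    rcases Int.emod_two_eq q.num with h1' | h1'
    · rcases Int.emod_two_eq (q.den : ℤ) with h2' | h2'
      · -- both even: contradicts coprimality
        have d1 : (2 : ℤ) ∣ q.num := Int.dvd_of_emod_eq_zero h1'
        have d2 : (2 : ℤ) ∣ (q.den : ℤ) := Int.dvd_of_emod_eq_zero h2'
        have d1' : 2 ∣ q.num.natAbs := by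
          have := Int.natAbs_dvd_natAbs.mpr d1; simpa using this
        have d2' : 2 ∣ q.den := by exact_mod_cast d2
        have h21 : (2 : ℕ) ∣ Nat.gcd q.num.natAbs q.den := Nat.dvd_gcd d1' d2'
        rw [hcop] at h21
        omega
      · omega
    · rcases Int.emod_two_eq (q.den : ℤ) with h2' | h2'
      · omega
      · -- both odd: then a ≡ c mod 2, contradicting ThetaCond
        rw [h1', h2'] at hmod
        simp at hmod
        omega
  · intro h
    have hcop : Int.gcd q.num (q.den : ℤ) = 1 := by
      have := q.reduced
      simpa [Int.gcd] using this
    obtain ⟨u, v, huv⟩ := Int.isCoprime_iff_gcd_eq_one.mpr hcop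
    set m := q.num with hm
    set n := (q.den : ℤ) with hn
    have huv' : u * m + v * n = 1 := huv
    have hn0 : n ≠ 0 := by
      simp only [hn]
      exact_mod_cast q.den_nz
    have hqeq : q = (m : ℚ) / (n : ℚ) := by
      rw [hm, hn]; push_cast; exact (Rat.num_div_den q).symm
    have hmodeq : (u * m + v * n) % 2 = 1 := by rw [huv']; norm_num
    rw [Int.add_emod, Int.mul_emod, Int.mul_emod v] at hmodeq
    rcases Int.emod_two_eq m with h1' | h1'
    · rcases Int.emod_two_eq n with h2' | h2'
      · omega
      · -- m even, n odd; v must be odd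
        have hv : v % 2 = 1 := by
          rw [h1', h2'] at hmodeq
          simp at hmodeq
          omega
        refine ⟨⟨!![m, m*u - v; n, (n+1)*u], ?_⟩, ⟨?_, ?_, ?_⟩, ?_, ?_⟩
        · rw [Matrix.det_fin_two_of]; ring_nf; linarith [huv']
        · show m % 2 = ((n+1)*u) % 2
          rw [h1', Int.mul_emod, Int.add_emod, h2']
          norm_num
        · show (m*u - v) % 2 = n % 2
          rw [Int.sub_emod, Int.mul_emod, h1', hv, h2']
          norm_num
        · show m % 2 ≠ (m*u - v) % 2
          rw [h1', Int.sub_emod, Int.mul_emod, h1', hv]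
          norm_num
        · have e : (!![m, m*u - v; n, (n+1)*u] : Matrix (Fin 2) (Fin 2) ℤ) 1 0 = n := rfl
          show ((!![m, m*u - v; n, (n+1)*u] : Matrix (Fin 2) (Fin 2) ℤ) 1 0 : ℚ) ≠ 0
          rw [e]; exact_mod_cast hn0
        · have e1 : (!![m, m*u - v; n, (n+1)*u] : Matrix (Fin 2) (Fin 2) ℤ) 0 0 = m := rfl
          have e2 : (!![m, m*u - v; n, (n+1)*u] : Matrix (Fin 2) (Fin 2) ℤ) 1 0 = n := rfl
          show q = ((!![m, m*u - v; n, (n+1)*u] : Matrix (Fin 2) (Fin 2) ℤ) 0 0 : ℚ) /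
              ((!![m, m*u - v; n, (n+1)*u] : Matrix (Fin 2) (Fin 2) ℤ) 1 0 : ℚ)
          rw [e1, e2]; exact hqeq
    · rcases Int.emod_two_eq n with h2' | h2'
      · -- m odd, n even; u must be odd
        have hu : u % 2 = 1 := by
          rw [h1', h2'] at hmodeq
          simp at hmodeq
          omega
        refine ⟨⟨!![m, (m-1)*v; n, u + n*v], ?_⟩, ⟨?_, ?_, ?_⟩, ?_, ?_⟩
        · rw [Matrix.det_fin_two_of]; ring_nf; linarith [huv']
        · show m % 2 = (u + n*v) % 2
          rw [h1', Int.add_emod, Int.mul_emod, hu, h2']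
          norm_num
        · show ((m-1)*v) % 2 = n % 2
          rw [Int.mul_emod, Int.sub_emod, h1', h2']
          norm_num
        · show m % 2 ≠ ((m-1)*v) % 2
          rw [h1', Int.mul_emod, Int.sub_emod, h1']
          norm_num
        · have e : (!![m, (m-1)*v; n, u + n*v] : Matrix (Fin 2) (Fin 2) ℤ) 1 0 = n := rfl
          show ((!![m, (m-1)*v; n, u + n*v] : Matrix (Fin 2) (Fin 2) ℤ) 1 0 : ℚ) ≠ 0
          rw [e]; exact_mod_cast hn0
        · have e1 : (!![m, (m-1)*v; n, u + n*v] : Matrix (Fin 2) (Fin 2) ℤ) 0 0 = m := rfl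
          have e2 : (!![m, (m-1)*v; n, u + n*v] : Matrix (Fin 2) (Fin 2) ℤ) 1 0 = n := rfl
          show q = ((!![m, (m-1)*v; n, u + n*v] : Matrix (Fin 2) (Fin 2) ℤ) 0 0 : ℚ) /
              ((!![m, (m-1)*v; n, u + n*v] : Matrix (Fin 2) (Fin 2) ℤ) 1 0 : ℚ)
          rw [e1, e2]; exact hqeq
      · omega
end

section
/- The orbit of 1 under the Θ-group acting on ℚ ∪ {∞} by Möbius transformations is exactly the set of rationals m/n in lowest terms with both m and n odd. -/
/-!
If `M = [[a, b], [c, d]]` lies in Θ then `a + b` and `c + d` are odd, and any reduced form of an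
odd-over-odd fraction is again odd-over-odd. Conversely, if `m / n` is reduced with `m, n` odd,
a Bézout relation `u m + v n = 1` gives a matrix of determinant one with row sums `m` and `n`;
since `u + v ≡ u m + v n = 1 (mod 2)`, its entries satisfy the Θ parity conditions.
-/

theorem Odd.of_dvd_int {d n : ℤ} (hn : Odd n) (hd : d ∣ n) : Odd d := by
  rw [← Int.natAbs_odd] at hn ⊢
  exact hn.of_dvd_nat (Int.natAbs_dvd_natAbs.mpr hd)

theorem Rat.odd_num_den_of_odd_div {m n : ℤ} (hm : Odd m) (hn : Odd n) :
    Odd (m / n : ℚ).num ∧ Odd ((m / n : ℚ).den : ℤ) := by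
  have hn0 : n ≠ 0 := by rintro rfl; exact Int.not_odd_zero hn
  rw [← Rat.divInt_eq_div]
  exact ⟨hm.of_dvd_int (Rat.num_dvd m hn0), hn.of_dvd_int (Rat.den_dvd m n)⟩

theorem Int.odd_add_of_mul_add_mul_eq_one {u v m n : ℤ} (hm : Odd m) (hn : Odd n)
    (h : u * m + v * n = 1) : Odd (u + v) := by
  obtain ⟨k, rfl⟩ := hm
  obtain ⟨l, rfl⟩ := hn
  exact ⟨-(u * k + v * l), by linear_combination h⟩

namespace ThetaCond

variable {M : SL2Z}

theorem odd_top_row_sum (h : ThetaCond M) : Odd (M.1 0 0 + M.1 0 1) :=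
  Int.odd_iff.mpr (by obtain ⟨-, -, h⟩ := h; omega)

theorem odd_bottom_row_sum (h : ThetaCond M) : Odd (M.1 1 0 + M.1 1 1) :=
  Int.odd_iff.mpr (by obtain ⟨h₁, h₂, h₃⟩ := h; omega)

end ThetaCond

def bezoutMatrix (m n u v : ℤ) (h : u * m + v * n = 1) : SL2Z :=
  ⟨!![m + v, -v; n - u, u], by rw [Matrix.det_fin_two_of]; linear_combination h⟩

section bezoutMatrix

variable {m n u v : ℤ} (h : u * m + v * n = 1)

theorem bezoutMatrix_top_row_sum :
    (bezoutMatrix m n u v h).1 0 0 + (bezoutMatrix m n u v h).1 0 1 = m := by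
  simp [bezoutMatrix]

theorem bezoutMatrix_bottom_row_sum :
    (bezoutMatrix m n u v h).1 1 0 + (bezoutMatrix m n u v h).1 1 1 = n := by
  simp [bezoutMatrix]

theorem thetaCond_bezoutMatrix (hm : Odd m) (hn : Odd n) : ThetaCond (bezoutMatrix m n u v h) := by
  have huv := Int.odd_iff.mp (Int.odd_add_of_mul_add_mul_eq_one hm hn h)
  rw [Int.odd_iff] at hm hn
  simp only [ThetaCond, bezoutMatrix, Matrix.of_apply, Matrix.cons_val', Matrix.cons_val_zero,
    Matrix.cons_val_one, Matrix.empty_val', Matrix.cons_val_fin_one]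
  omega

end bezoutMatrix

/-- A rational number is in the Θ-orbit of 1 (i.e., equals (a+b)/(c+d) for some
[[a,b],[c,d]] ∈ Θ with c+d ≠ 0) iff, in lowest terms m/n, both m and n are odd. -/
theorem theta_orbit_one (q : ℚ) :
    (∃ M : SL2Z, ThetaCond M ∧ ((M.1 1 0 + M.1 1 1 : ℤ) : ℚ) ≠ 0 ∧
        q = ((M.1 0 0 + M.1 0 1 : ℤ) : ℚ) / ((M.1 1 0 + M.1 1 1 : ℤ) : ℚ)) ↔
      (Odd q.num ∧ Odd (q.den : ℤ)) := by
  constructor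
  · rintro ⟨M, hM, -, rfl⟩
    exact Rat.odd_num_den_of_odd_div hM.odd_top_row_sum hM.odd_bottom_row_sum
  · rintro ⟨hnum, hden⟩
    obtain ⟨u, v, h⟩ := q.isCoprime_num_den
    refine ⟨bezoutMatrix _ _ u v h, thetaCond_bezoutMatrix h hnum hden, ?_, ?_⟩
    · rw [bezoutMatrix_bottom_row_sum]
      exact_mod_cast q.den_nz
    · rw [bezoutMatrix_top_row_sum, bezoutMatrix_bottom_row_sum]
      push_cast
      exact (Rat.num_div_den q).symm
end
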